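/- Let $(X,q)$ be an affine mobi space over a mobi algebra $(A,p,0,\text{½},1)$ containing an element $2$ with $p(0,\text{½},2)=1$, and fix $e\in X$. Define $x+y=q(e,2,q(x,\text{½},y))$. Then $+$ is associative, commutative, has identity $e$, and every $x$ has inverse $-x=q(e,p(1,2,0),x)$; i.e. $(X,+,e)$ is an abelian group. -/

import Mathlib

/-! The midpoint `x ⊕ y := q x ½ y` is commutative (X5 with `p 1 ½ 0 = ½`), idempotent (X3), cancellative
(X4), and, by affineness at `a = ½`, medial. Since `q e ½ (q e 2 w) = w`, the sum `x + y` is the unique point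
whose midpoint with `e` is `x ⊕ y`; so each group law reduces, after cancelling `e ⊕ -` with X4, to an identity
between midpoints. Associativity follows from mediality and commutativity; for inverses,
`(-x) ⊕ x = q e (p (p 1 2 0) ½ 1) x` by X5, and that parameter is `0` because `½ · 2 = 1`. -/

structure MobiAlgebra (A : Type*) where
  p : A → A → A → A
  zero : A
  half : A
  one : A
  A1 : p one half zero = half
  A2 : ∀ a, p zero a one = a
  A3 : ∀ a b, p a b a = a
  A4 : ∀ a b, p a zero b = a
  A5 : ∀ a b, p a one b = b
  A6 : ∀ a b₁ b₂, p a half b₁ = p a half b₂ → b₁ = b₂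
  A7 : ∀ a b c₁ c₂ c₃, p a (p c₁ c₂ c₃) b = p (p a c₁ b) c₂ (p a c₃ b)
  A8 : ∀ a₁ a₂ b₁ b₂ c,
    p (p a₁ c b₁) half (p a₂ c b₂) = p (p a₁ half a₂) c (p b₁ half b₂)

structure MobiSpace {A : Type*} (M : MobiAlgebra A) (X : Type*) where
  q : X → A → X → X
  X1 : ∀ x y, q x M.zero y = x
  X2 : ∀ x y, q x M.one y = y
  X3 : ∀ x a, q x a x = x
  X4 : ∀ x y₁ y₂, q x M.half y₁ = q x M.half y₂ → y₁ = y₂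
  X5 : ∀ x y a b c, q (q x a y) b (q x c y) = q x (M.p a b c) y

namespace MobiAlgebra

variable {A : Type*} (M : MobiAlgebra A)

theorem p_half_comm (a b : A) : M.p a M.half b = M.p b M.half a := by
  simpa only [M.A1, M.A5, M.A4] using M.A7 a b M.one M.half M.zero

theorem p_p_one_two_zero_half_one {two : A} (h2 : M.p M.zero M.half two = M.one) :
    M.p (M.p M.one two M.zero) M.half M.one = M.zero := by
  have h := M.A7 M.one M.zero two M.half M.zero
  rw [M.A4, M.p_half_comm two, h2, M.A5] at h
  exact h.symm

end MobiAlgebra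

namespace MobiSpace

variable {A X : Type*} {M : MobiAlgebra A} (S : MobiSpace M X)

theorem q_half_comm (x y : X) : S.q x M.half y = S.q y M.half x := by
  simpa only [S.X2, S.X1, M.A1] using (S.X5 x y M.one M.half M.zero).symm

theorem q_half_q_two {two : A} (h2 : M.p M.zero M.half two = M.one) (e w : X) :
    S.q e M.half (S.q e two w) = w := by
  simpa only [h2, S.X1, S.X2] using S.X5 e w M.zero M.half two

theorem q_q_half (e x : X) (a : A) :
    S.q (S.q e a x) M.half x = S.q e (M.p a M.half M.one) x := by
  simpa only [S.X2] using S.X5 e x a M.half M.one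

variable (medial : ∀ a b c d : X,
  S.q (S.q a M.half b) M.half (S.q c M.half d) = S.q (S.q a M.half c) M.half (S.q b M.half d))
include medial

theorem q_half_q_half_left_distrib (e u z : X) :
    S.q e M.half (S.q u M.half z) = S.q (S.q e M.half u) M.half (S.q e M.half z) := by
  rw [medial, S.X3]

theorem q_half_assoc_of_eq {e x y z u v : X} (hu : S.q e M.half u = S.q x M.half y)
    (hv : S.q e M.half v = S.q y M.half z) :
    S.q e M.half (S.q u M.half z) = S.q e M.half (S.q x M.half v) := by
  rw [S.q_half_q_half_left_distrib medial, hu, medial, S.q_half_comm x e, ← hv, ← medial,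
    S.X3]

end MobiSpace

theorem affine_mobi_to_group {A X : Type*} (M : MobiAlgebra A) (S : MobiSpace M X)
    (affine : ∀ (x₁ x₂ y₁ y₂ : X) (a : A),
      S.q (S.q x₁ a y₁) M.half (S.q x₂ a y₂)
        = S.q (S.q x₁ M.half x₂) a (S.q y₁ M.half y₂))
    (two : A) (h2 : M.p M.zero M.half two = M.one) (e : X) :
    let add : X → X → X := fun x y => S.q e two (S.q x M.half y)
    (∀ x y z, add (add x y) z = add x (add y z)) ∧
    (∀ x y, add x y = add y x) ∧
    (∀ x, add e x = x) ∧
    (∀ x, add (S.q e (M.p M.one two M.zero) x) x = e) := by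
  intro add
  have medial : ∀ a b c d : X, S.q (S.q a M.half b) M.half (S.q c M.half d)
      = S.q (S.q a M.half c) M.half (S.q b M.half d) := fun a b c d => affine a c b d M.half
  have half_add : ∀ x y, S.q e M.half (add x y) = S.q x M.half y := fun x y =>
    S.q_half_q_two h2 e _
  refine ⟨fun x y z => ?_, fun x y => ?_, fun x => ?_, fun x => ?_⟩
  · refine S.X4 e _ _ ?_
    rw [half_add, half_add]
    exact S.X4 e _ _ (S.q_half_assoc_of_eq medial (half_add x y) (half_add y z))
  · exact congrArg (S.q e two) (S.q_half_comm x y)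
  · exact S.X4 e _ _ (half_add e x)
  · refine S.X4 e _ _ ?_
    rw [half_add, S.X3, S.q_q_half, M.p_p_one_two_zero_half_one h2, S.X1]
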